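/- Let L* ∈ R^{n1×n2} have rank r with smallest positive singular value σ_r*, let Z* = [U*; V*] be its balanced SVD factorization, and let Z = [U; V] be perfectly balanced, i.e. ‖UᵀU − VᵀV‖_F = 0. Then d_P(Z, Z*) ≤ (√(2r)/√((√2 − 1)·σ_r*)) · ‖UVᵀ − L*‖_op. -/

import Mathlib

open Matrix

noncomputable def opNorm {m n : Type*} [Fintype m] [Fintype n] [DecidableEq n]
    (A : Matrix m n ℝ) : ℝ :=
  ‖LinearMap.toContinuousLinearMap (Matrix.toEuclideanLin A)‖

noncomputable def frob {m n : Type*} [Fintype m] [Fintype n] (A : Matrix m n ℝ) : ℝ :=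
  Real.sqrt (∑ i, ∑ j, (A i j) ^ 2)

noncomputable def frobS {n1 n2 : ℕ} (S : Finset (Fin n1 × Fin n2))
    (A : Matrix (Fin n1) (Fin n2) ℝ) : ℝ :=
  Real.sqrt (∑ p ∈ S, (A p.1 p.2) ^ 2)

noncomputable def dP {m : Type*} [Fintype m] {r : ℕ}
    (Z Z' : Matrix m (Fin r) ℝ) : ℝ :=
  sInf { d | ∃ P : Matrix (Fin r) (Fin r) ℝ, Pᵀ * P = 1 ∧ d = frob (Z - Z' * P) }

/-!
Choose the orthogonal `P` by polar decomposition of `Zᵀ Z*`, so that `Zᵀ Z* P` is positive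
semidefinite, and put `Δ = Z - Z* P`. The Ge–Jin–Zheng inequality bounds
`2(√2 - 1)‖Δ (Z* P)ᵀ‖_F²` by `‖Z Zᵀ - Z* Z*ᵀ‖_F²`, while `‖Δ (Z* P)ᵀ‖_F² ≥ 2σ_r ‖Δ‖_F²` because
`Z*ᵀ Z* = 2Σ`. For two balanced factorizations `‖Z Zᵀ - Z* Z*ᵀ‖_F² ≤ 4‖U Vᵀ - L*‖_F²`, and
`U Vᵀ - L*` has rank at most `2r`, so its Frobenius norm is at most `√(2r)` times its operator
norm.
-/

lemma two_mul_sqrt_two_sub_one_mul_le {a b g w : ℝ} (ha : 0 ≤ a) (hb : 0 ≤ b)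
    (hgw : 0 ≤ g + w) (hg : g ^ 2 ≤ a * b) :
    2 * (√2 - 1) * w ≤ a + 2 * b + 4 * g + 2 * w := by
  have h2 : √2 ^ 2 = 2 := Real.sq_sqrt zero_le_two
  have hlt : √2 < 2 := by nlinarith [Real.sqrt_nonneg 2]
  have hamgm : 2 * √2 * |g| ≤ a + 2 * b := by
    nlinarith [sq_nonneg (a - 2 * b), sq_abs g, abs_nonneg g, Real.sqrt_nonneg 2]
  nlinarith [neg_abs_le g, mul_le_mul_of_nonneg_left (neg_abs_le g) (Real.sqrt_nonneg 2)]

lemma le_sqrt_div_sqrt_mul_of_mul_sq_le {c k x y : ℝ} (hc : 0 < c) (hx : 0 ≤ x) (hy : 0 ≤ y)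
    (h : c * x ^ 2 ≤ k * y ^ 2) : x ≤ √k / √c * y := by
  rw [div_mul_eq_mul_div, le_div_iff₀ (Real.sqrt_pos.mpr hc)]
  calc x * √c = √(x ^ 2 * c) := by rw [Real.sqrt_mul (sq_nonneg x), Real.sqrt_sq hx]
    _ ≤ √(k * y ^ 2) := Real.sqrt_le_sqrt (by linarith)
    _ = √k * y := by rw [Real.sqrt_mul' k (sq_nonneg y), Real.sqrt_sq hy]

lemma opNorm_nonneg {m n : Type*} [Fintype m] [Fintype n] [DecidableEq n] (A : Matrix m n ℝ) :
    0 ≤ opNorm A :=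
  norm_nonneg _

lemma dP_le_frob_sub_mul {m : Type*} [Fintype m] {r : ℕ} (Z Z' : Matrix m (Fin r) ℝ)
    {P : Matrix (Fin r) (Fin r) ℝ} (hP : Pᵀ * P = 1) : dP Z Z' ≤ frob (Z - Z' * P) :=
  csInf_le ⟨0, fun _ ⟨_, _, hd⟩ => hd ▸ Real.sqrt_nonneg _⟩ ⟨P, hP, rfl⟩

namespace Matrix

lemma rank_mul_transpose_sub_mul_transpose_le {m n k : Type*} [Fintype n] [Fintype k]
    (U U' : Matrix m k ℝ) (V V' : Matrix n k ℝ) :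
    (U * Vᵀ - U' * V'ᵀ).rank ≤ 2 * Fintype.card k := by
  have h : U * Vᵀ - U' * V'ᵀ = fromCols U (-U') * (fromCols V V')ᵀ := by
    rw [transpose_fromCols, fromCols_mul_fromRows, Matrix.neg_mul, sub_eq_add_neg]
  rw [h, two_mul, ← Fintype.card_sum]
  exact (rank_mul_le_left _ _).trans (rank_le_card_width _)

lemma diagonal_sqrt_mul_self {k : Type*} [Fintype k] [DecidableEq k] {s : k → ℝ}
    (hs : ∀ i, 0 ≤ s i) :
    (diagonal fun i => √(s i)) * (diagonal fun i => √(s i)) = diagonal s := by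
  rw [diagonal_mul_diagonal]
  exact congrArg diagonal (funext fun i => Real.mul_self_sqrt (hs i))

lemma transpose_mul_self_mul_diagonal_sqrt {m k : Type*} [Fintype m] [Fintype k] [DecidableEq k]
    {O : Matrix m k ℝ} (hO : Oᵀ * O = 1) {s : k → ℝ} (hs : ∀ i, 0 ≤ s i) :
    (O * diagonal fun i => √(s i))ᵀ * (O * diagonal fun i => √(s i)) = diagonal s := by
  rw [transpose_mul, diagonal_transpose, Matrix.mul_assoc, ← Matrix.mul_assoc Oᵀ, hO,
    Matrix.one_mul, diagonal_sqrt_mul_self hs]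

lemma mul_diagonal_mul_transpose_eq_mul_diagonal_sqrt {m n k : Type*} [Fintype k]
    [DecidableEq k] (U : Matrix m k ℝ) (V : Matrix n k ℝ) {s : k → ℝ} (hs : ∀ i, 0 ≤ s i) :
    U * diagonal s * Vᵀ = (U * diagonal fun i => √(s i)) * (V * diagonal fun i => √(s i))ᵀ := by
  rw [transpose_mul, diagonal_transpose, ← diagonal_sqrt_mul_self hs]
  simp only [Matrix.mul_assoc]

section

variable {l m n k : Type*} [Fintype l] [Fintype m] [Fintype n] [Fintype k]

lemma frob_nonneg (A : Matrix m n ℝ) : 0 ≤ frob A := Real.sqrt_nonneg _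

lemma trace_transpose_mul_eq_sum (A B : Matrix m n ℝ) :
    trace (Aᵀ * B) = ∑ i, ∑ j, A i j * B i j := by
  simp only [trace, diag, mul_apply, transpose_apply]
  exact Finset.sum_comm

lemma trace_transpose_mul_comm (X Y : Matrix m n ℝ) : trace (Xᵀ * Y) = trace (Yᵀ * X) := by
  rw [← trace_transpose, transpose_mul, transpose_transpose]

lemma trace_mul_transpose_mul_mul_transpose (X : Matrix m k ℝ) (Y : Matrix l k ℝ)
    (W : Matrix l n ℝ) (T : Matrix m n ℝ) :
    trace (X * Yᵀ * (W * Tᵀ)) = trace (Tᵀ * X * (Yᵀ * W)) := by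
  rw [Matrix.mul_assoc, trace_mul_comm, Matrix.mul_assoc, Matrix.mul_assoc, trace_mul_comm,
    Matrix.mul_assoc, trace_mul_comm, Matrix.mul_assoc]

lemma trace_transpose_mul_mul_transpose (U U' : Matrix m k ℝ) (V V' : Matrix n k ℝ) :
    trace ((U * Vᵀ)ᵀ * (U' * V'ᵀ)) = trace ((Vᵀ * V')ᵀ * (Uᵀ * U')) := by
  rw [transpose_mul, transpose_transpose, trace_mul_transpose_mul_mul_transpose, transpose_mul,
    transpose_transpose]

lemma trace_transpose_mul_self_mul_nonneg (X : Matrix m n ℝ) {H : Matrix n n ℝ}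
    (hH : H.PosSemidef) : 0 ≤ trace (Xᵀ * X * H) := by
  rw [Matrix.mul_assoc, trace_mul_comm]
  simpa using (hH.mul_mul_conjTranspose_same X).trace_nonneg

lemma frob_sq (A : Matrix m n ℝ) : frob A ^ 2 = trace (Aᵀ * A) := by
  rw [frob, Real.sq_sqrt (by positivity), trace_transpose_mul_eq_sum]
  simp only [sq]

lemma frob_sq_add (X Y : Matrix m n ℝ) :
    frob (X + Y) ^ 2 = frob X ^ 2 + 2 * trace (Xᵀ * Y) + frob Y ^ 2 := by
  rw [frob_sq, frob_sq, frob_sq, transpose_add, Matrix.add_mul, Matrix.mul_add, Matrix.mul_add,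
    trace_add, trace_add, trace_add, trace_transpose_mul_comm Y X]
  ring

lemma frob_sq_sub (X Y : Matrix m n ℝ) :
    frob (X - Y) ^ 2 = frob X ^ 2 - 2 * trace (Xᵀ * Y) + frob Y ^ 2 := by
  rw [sub_eq_add_neg, frob_sq_add, frob_sq Y, frob_sq (-Y)]
  simp only [transpose_neg, Matrix.mul_neg, Matrix.neg_mul, neg_neg, trace_neg]
  ring

lemma trace_transpose_mul_sq_le (A B : Matrix m n ℝ) :
    trace (Aᵀ * B) ^ 2 ≤ frob A ^ 2 * frob B ^ 2 := by
  rw [frob_sq, frob_sq]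
  simp only [trace_transpose_mul_eq_sum, ← Fintype.sum_prod_type', ← sq]
  exact Finset.sum_mul_sq_le_sq_mul_sq Finset.univ (fun p : m × n => A p.1 p.2)
    (fun p => B p.1 p.2)

lemma eq_of_frob_sub_eq_zero {A B : Matrix m n ℝ} (h : frob (A - B) = 0) : A = B := by
  have h2 : trace ((A - B)ᵀ * (A - B)) = 0 := by rw [← frob_sq, h, sq, zero_mul]
  rw [← conjTranspose_eq_transpose_of_trivial, trace_conjTranspose_mul_self_eq_zero_iff] at h2
  exact sub_eq_zero.mp h2

lemma frob_mul_of_mul_transpose_eq_one [DecidableEq n] (M : Matrix m n ℝ) {P : Matrix n n ℝ}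
    (hP : P * Pᵀ = 1) : frob (M * P) = frob M := by
  have h : frob (M * P) ^ 2 = frob M ^ 2 := by
    rw [frob_sq, frob_sq, transpose_mul, Matrix.mul_assoc, trace_mul_comm, Matrix.mul_assoc,
      Matrix.mul_assoc, hP, Matrix.mul_one, trace_mul_comm]
  exact (pow_left_inj₀ (frob_nonneg _) (frob_nonneg _) two_ne_zero).mp h

lemma mul_frob_sq_le_frob_mul_transpose_sq [DecidableEq k] (M : Matrix m k ℝ)
    {W : Matrix l k ℝ} {d : k → ℝ} {c : ℝ} (hW : Wᵀ * W = diagonal d) (hd : ∀ i, c ≤ d i) :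
    c * frob M ^ 2 ≤ frob (M * Wᵀ) ^ 2 := by
  have hMM : (Mᵀ * M).PosSemidef := by
    simpa using posSemidef_conjTranspose_mul_self M
  rw [frob_sq, frob_sq, transpose_mul, transpose_transpose, trace_mul_transpose_mul_mul_transpose,
    hW]
  simp only [trace, diag, diagonal_mul, Finset.mul_sum]
  exact Finset.sum_le_sum fun i _ => mul_le_mul_of_nonneg_right (hd i) hMM.diag_nonneg

lemma frob_sq_mul_transpose_sub (Z R : Matrix m k ℝ) :
    frob (Z * Zᵀ - R * Rᵀ) ^ 2 =
      frob (Zᵀ * Z) ^ 2 - 2 * frob (Zᵀ * R) ^ 2 + frob (Rᵀ * R) ^ 2 := by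
  simp only [frob_sq, transpose_sub, transpose_mul, transpose_transpose, sub_mul, mul_sub,
    trace_sub]
  rw [trace_mul_transpose_mul_mul_transpose Z Z Z Z, trace_mul_transpose_mul_mul_transpose Z Z R R,
    trace_mul_transpose_mul_mul_transpose R R Z Z, trace_mul_transpose_mul_mul_transpose R R R R,
    trace_mul_comm (Zᵀ * R)]
  ring

/-- With `Δ = Z - R`, `A = ΔᵀΔ` and `S = ΔᵀR` (symmetric because `ZᵀR = S + RᵀR` is), the left
side expands to `‖A‖² + 2‖S‖² + 4⟨A, S⟩ + 2⟨A, RᵀR⟩`; Cauchy–Schwarz and AM–GM control the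
possibly negative `⟨A, S⟩` against `‖A‖² + 2‖S‖²` and `⟨A, S + RᵀR⟩ ≥ 0`. -/
theorem two_mul_sqrt_two_sub_one_mul_frob_sq_le (Z R : Matrix m k ℝ)
    (hZR : (Zᵀ * R).PosSemidef) :
    2 * (√2 - 1) * frob ((Z - R) * Rᵀ) ^ 2 ≤ frob (Z * Zᵀ - R * Rᵀ) ^ 2 := by
  set Δ := Z - R
  set A := Δᵀ * Δ with hA_def
  set S := Δᵀ * R with hS_def
  set Q := Rᵀ * R with hQ_def
  have hZ : Z = Δ + R := (sub_add_cancel Z R).symm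
  have hA : Aᵀ = A := by rw [hA_def, transpose_mul, transpose_transpose]
  have hQ : Qᵀ = Q := by rw [hQ_def, transpose_mul, transpose_transpose]
  have hZR_eq : Zᵀ * R = S + Q := by rw [hZ, transpose_add, Matrix.add_mul]
  have hS : Sᵀ = S := by
    have h : (Zᵀ * R)ᴴ = Zᵀ * R := hZR.1
    rw [conjTranspose_eq_transpose_of_trivial, hZR_eq, transpose_add, hQ] at h
    exact add_right_cancel h
  have hZZ : Zᵀ * Z = A + (S + S) + Q := by
    nth_rw 2 [← hS]
    rw [hZ, hS_def, transpose_add, Matrix.add_mul, Matrix.mul_add, Matrix.mul_add, transpose_mul,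
      transpose_transpose]
    abel
  have hw : frob ((Z - R) * Rᵀ) ^ 2 = trace (A * Q) := by
    rw [frob_sq, transpose_mul, transpose_transpose, trace_mul_transpose_mul_mul_transpose,
      trace_mul_comm]
  have hg : trace (A * S) ^ 2 ≤ frob A ^ 2 * frob S ^ 2 := by
    simpa only [hA] using trace_transpose_mul_sq_le A S
  have hgw : 0 ≤ trace (A * S) + trace (A * Q) := by
    rw [← trace_add, ← Matrix.mul_add, ← hZR_eq]
    exact trace_transpose_mul_self_mul_nonneg Δ hZR
  rw [hw, frob_sq_mul_transpose_sub, hZZ, hZR_eq, ← hQ_def]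
  refine (two_mul_sqrt_two_sub_one_mul_le (sq_nonneg (frob A)) (sq_nonneg (frob S)) hgw hg).trans
    (le_of_eq ?_)
  simp only [frob_sq, transpose_add, hA, hS, hQ, Matrix.add_mul, Matrix.mul_add, trace_add]
  rw [trace_mul_comm S A, trace_mul_comm Q A, trace_mul_comm Q S]
  ring

/-- Both sides equal `4‖UᵀU‖² + 4‖U'ᵀU'‖² - 8⟨UᵀU', VᵀV'⟩`. -/
theorem frob_sq_fromRows_mul_transpose_sub_add (U U' : Matrix m k ℝ) (V V' : Matrix n k ℝ)
    (hUV : Uᵀ * U = Vᵀ * V) (hUV' : U'ᵀ * U' = V'ᵀ * V') :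
    frob (fromRows U V * (fromRows U V)ᵀ - fromRows U' V' * (fromRows U' V')ᵀ) ^ 2
        + 2 * frob (Uᵀ * U' - Vᵀ * V') ^ 2 =
      4 * frob (U * Vᵀ - U' * V'ᵀ) ^ 2 := by
  rw [frob_sq_mul_transpose_sub]
  simp only [transpose_fromRows, fromCols_mul_fromRows]
  rw [frob_sq_sub (U * Vᵀ), frob_sq (U * Vᵀ), frob_sq (U' * V'ᵀ),
    trace_transpose_mul_mul_transpose, trace_transpose_mul_mul_transpose,
    trace_transpose_mul_mul_transpose, ← hUV, ← hUV', ← frob_sq, ← frob_sq,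
    frob_sq_add, frob_sq_add, frob_sq_add, frob_sq_sub, trace_transpose_mul_comm (Vᵀ * V'),
    ← frob_sq, ← frob_sq]
  ring

open scoped Matrix.Norms.L2Operator in
lemma eigenvalues_transpose_mul_self_le_opNorm_sq [DecidableEq n] (A : Matrix m n ℝ)
    (hA : (Aᵀ * A).IsHermitian) (i : n) : hA.eigenvalues i ≤ opNorm A ^ 2 := by
  have : Nonempty n := ⟨i⟩
  have hnorm : ‖Aᵀ * A‖ = opNorm A ^ 2 := by
    rw [sq, ← conjTranspose_eq_transpose_of_trivial]
    exact l2_opNorm_conjTranspose_mul_self A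
  exact hnorm ▸ (le_abs_self _).trans
    (spectrum.norm_le_norm_of_mem (hA.eigenvalues_mem_spectrum_real i))

theorem frob_sq_le_rank_mul_opNorm_sq [DecidableEq n] (A : Matrix m n ℝ) :
    frob A ^ 2 ≤ A.rank * opNorm A ^ 2 := by
  classical
  have hA : (Aᵀ * A).PosSemidef := by simpa using posSemidef_conjTranspose_mul_self A
  have hrank : A.rank = (Finset.univ.filter fun i => hA.1.eigenvalues i ≠ 0).card := by
    rw [← rank_transpose_mul_self, hA.1.rank_eq_card_non_zero_eigs, Fintype.card_subtype]
  rw [frob_sq, hA.1.trace_eq_sum_eigenvalues, hrank, ← Finset.sum_filter_ne_zero, ← nsmul_eq_mul]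
  exact Finset.sum_le_card_nsmul _ _ _ fun i _ =>
    eigenvalues_transpose_mul_self_le_opNorm_sq A hA.1 i

end

section Polar

open Filter Topology

variable {n : Type*} [Fintype n]

lemma isCompact_setOf_transpose_mul_self_eq_one [DecidableEq n] :
    IsCompact {P : Matrix n n ℝ | Pᵀ * P = 1} := by
  have hclosed : IsClosed {P : Matrix n n ℝ | Pᵀ * P = 1} :=
    isClosed_eq (continuous_id.matrix_transpose.matrix_mul continuous_id) continuous_const
  refine (isCompact_univ_pi fun _ => isCompact_univ_pi fun _ =>
    (isCompact_Icc : IsCompact (Set.Icc (-1 : ℝ) 1))).of_isClosed_subset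
    hclosed fun (P : Matrix n n ℝ) (hP : Pᵀ * P = 1) =>
      Set.mem_univ_pi.mpr fun i => Set.mem_univ_pi.mpr fun j => ?_
  have hcol : ∑ a, P a j * P a j = 1 := by
    have h : (Pᵀ * P) j j = 1 := by rw [hP, one_apply_eq]
    simpa only [mul_apply, transpose_apply] using h
  have hle : P i j * P i j ≤ 1 :=
    hcol ▸ Finset.single_le_sum (fun a _ => mul_self_nonneg (P a j)) (Finset.mem_univ i)
  exact abs_le.mp (abs_le_one_iff_mul_self_le_one.mpr hle)

lemma isClosed_setOf_posSemidef : IsClosed {A : Matrix n n ℝ | A.PosSemidef} := by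
  simp only [posSemidef_iff_dotProduct_mulVec, Set.ofPred_and, Set.ofPred_forall]
  exact (isClosed_eq continuous_id.matrix_conjTranspose continuous_id).inter
    (isClosed_iInter fun x => isClosed_le continuous_const
      (continuous_const.dotProduct (continuous_id.matrix_mulVec continuous_const)))

open scoped MatrixOrder in
lemma exists_orthogonal_mul_posSemidef_of_isUnit [DecidableEq n] {M : Matrix n n ℝ}
    (hM : IsUnit M) :
    ∃ P : Matrix n n ℝ, Pᵀ * P = 1 ∧ (M * P).PosSemidef := by
  have hMM : (M * Mᵀ).PosSemidef := by simpa using posSemidef_self_mul_conjTranspose M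
  set H := CFC.sqrt (M * Mᵀ)
  have hH : H.PosSemidef := (CFC.sqrt_nonneg _).posSemidef
  have hHH : H * H = M * Mᵀ := CFC.sqrt_mul_sqrt_self _ hMM.nonneg
  have hHt : Hᵀ = H := by simpa using hH.1.eq
  have hdet : IsUnit M.det := (isUnit_iff_isUnit_det M).mp hM
  refine ⟨M⁻¹ * H, mul_eq_one_comm.mp ?_, ?_⟩
  · rw [transpose_mul, hHt, transpose_nonsing_inv, Matrix.mul_assoc, ← Matrix.mul_assoc H,
      hHH, ← Matrix.mul_assoc, ← Matrix.mul_assoc, nonsing_inv_mul _ hdet, Matrix.one_mul,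
      mul_nonsing_inv _ (by rwa [det_transpose])]
  · rwa [← Matrix.mul_assoc, mul_nonsing_inv _ hdet, Matrix.one_mul]

lemma isClosed_setOf_exists_orthogonal_mul_posSemidef [DecidableEq n] :
    IsClosed {N : Matrix n n ℝ | ∃ P : Matrix n n ℝ, Pᵀ * P = 1 ∧ (N * P).PosSemidef} := by
  set K := {P : Matrix n n ℝ | Pᵀ * P = 1}
  have : CompactSpace K := isCompact_iff_compactSpace.mp isCompact_setOf_transpose_mul_self_eq_one
  have h : {N : Matrix n n ℝ | ∃ P, Pᵀ * P = 1 ∧ (N * P).PosSemidef} =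
      Prod.fst '' {q : Matrix n n ℝ × K | (q.1 * q.2).PosSemidef} := by
    ext N
    exact ⟨fun ⟨P, hP, hNP⟩ => ⟨(N, ⟨P, hP⟩), hNP, rfl⟩,
      fun ⟨q, hq, hqN⟩ => ⟨q.2, q.2.2, hqN ▸ hq⟩⟩
  rw [h]
  exact isClosedMap_fst_of_compactSpace _ (isClosed_setOf_posSemidef.preimage
    (continuous_fst.matrix_mul (continuous_subtype_val.comp continuous_snd)))

/-- Polar decomposition `N = H Pᵀ`: a limit of the invertible case along `N + t • 1`, `t → 0`. -/
theorem exists_orthogonal_mul_posSemidef [DecidableEq n] (N : Matrix n n ℝ) :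
    ∃ P : Matrix n n ℝ, Pᵀ * P = 1 ∧ (N * P).PosSemidef := by
  have hunit : ∀ᶠ t in 𝓝[≠] (0 : ℝ), IsUnit (N + t • 1) := by
    filter_upwards [nhdsNE_of_nhdsNE_sdiff_finite Filter.univ_mem
      (finite_spectrum (-N)).to_subtype] with t ht
    simpa [spectrum.mem_iff, Algebra.algebraMap_eq_smul_one, add_comm] using ht.2
  have hlim : Tendsto (fun t : ℝ => N + t • (1 : Matrix n n ℝ)) (𝓝[≠] 0) (𝓝 N) := by
    have hcont : Continuous fun t : ℝ => N + t • (1 : Matrix n n ℝ) :=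
      continuous_const.add (continuous_id.smul continuous_const)
    simpa using (hcont.tendsto 0).mono_left nhdsWithin_le_nhds
  exact isClosed_setOf_exists_orthogonal_mul_posSemidef.mem_of_tendsto hlim
    (hunit.mono fun t ht => exists_orthogonal_mul_posSemidef_of_isUnit ht)

end Polar

end Matrix

theorem procrustes_distance_op_norm_bound_general {n1 n2 r : ℕ}
    (Lstar : Matrix (Fin n1) (Fin n2) ℝ)
    (Uo : Matrix (Fin n1) (Fin r) ℝ) (Vo : Matrix (Fin n2) (Fin r) ℝ)
    (s : Fin r → ℝ) (hs : ∀ i, 0 < s i)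
    (hUo : Uoᵀ * Uo = 1) (hVo : Voᵀ * Vo = 1)
    (hL : Lstar = Uo * Matrix.diagonal s * Voᵀ)
    (σr : ℝ) (hσr : IsLeast (Set.range s) σr)
    (U : Matrix (Fin n1) (Fin r) ℝ) (V : Matrix (Fin n2) (Fin r) ℝ)
    (hbal : frob (Uᵀ * U - Vᵀ * V) = 0) :
    dP (Matrix.fromRows U V)
        (Matrix.fromRows (Uo * Matrix.diagonal fun i => Real.sqrt (s i))
          (Vo * Matrix.diagonal fun i => Real.sqrt (s i))) ≤
      (Real.sqrt (2 * r) / Real.sqrt ((Real.sqrt 2 - 1) * σr)) *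
        opNorm (U * Vᵀ - Lstar) := by
  obtain ⟨i₀, rfl⟩ := hσr.1
  have hs₀ : ∀ i, 0 ≤ s i := fun i => (hs i).le
  subst hL
  rw [mul_diagonal_mul_transpose_eq_mul_diagonal_sqrt Uo Vo hs₀]
  set Us := Uo * diagonal fun i => √(s i)
  set Vs := Vo * diagonal fun i => √(s i)
  set Z := fromRows U V
  set Zs := fromRows Us Vs
  set E := U * Vᵀ - Us * Vsᵀ
  have hUs : Usᵀ * Us = diagonal s := transpose_mul_self_mul_diagonal_sqrt hUo hs₀
  have hVs : Vsᵀ * Vs = diagonal s := transpose_mul_self_mul_diagonal_sqrt hVo hs₀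
  obtain ⟨P, hP, hPSD⟩ := exists_orthogonal_mul_posSemidef (Zᵀ * Zs)
  set Δ := Z - Zs * P
  have hlow : 2 * s i₀ * frob Δ ^ 2 ≤ frob (Δ * (Zs * P)ᵀ) ^ 2 := by
    have hZs : Zsᵀ * Zs = diagonal fun i => s i + s i := by
      rw [transpose_fromRows, fromCols_mul_fromRows, hUs, hVs, diagonal_add]
    rw [transpose_mul, ← Matrix.mul_assoc,
      ← frob_mul_of_mul_transpose_eq_one Δ (P := Pᵀ) (by rw [transpose_transpose, hP])]
    exact mul_frob_sq_le_frob_mul_transpose_sq _ hZs fun i => by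
      linarith [hσr.2 ⟨i, rfl⟩]
  have hgjz : 2 * (√2 - 1) * frob (Δ * (Zs * P)ᵀ) ^ 2 ≤ frob (Z * Zᵀ - Zs * Zsᵀ) ^ 2 := by
    have hR : Zs * P * (Zs * P)ᵀ = Zs * Zsᵀ := by
      rw [transpose_mul, Matrix.mul_assoc, ← Matrix.mul_assoc P, mul_eq_one_comm.mp hP,
        Matrix.one_mul]
    simpa only [hR] using
      two_mul_sqrt_two_sub_one_mul_frob_sq_le Z (Zs * P) (by rwa [← Matrix.mul_assoc])
  have hgram : frob (Z * Zᵀ - Zs * Zsᵀ) ^ 2 ≤ 4 * frob E ^ 2 := by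
    rw [← frob_sq_fromRows_mul_transpose_sub_add U Us V Vs (eq_of_frob_sub_eq_zero hbal)
      (hUs.trans hVs.symm)]
    linarith [sq_nonneg (frob (Uᵀ * Us - Vᵀ * Vs))]
  have hrank : (E.rank : ℝ) ≤ 2 * r := by
    exact_mod_cast (rank_mul_transpose_sub_mul_transpose_le U Us V Vs).trans_eq
      (by rw [Fintype.card_fin])
  have hfrobE : frob E ^ 2 ≤ 2 * r * opNorm E ^ 2 := (frob_sq_le_rank_mul_opNorm_sq E).trans
    (mul_le_mul_of_nonneg_right hrank (sq_nonneg _))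
  have hsqrt2 : 0 < √2 - 1 := by
    have : (1 : ℝ) < √2 := by rw [Real.lt_sqrt zero_le_one]; norm_num
    linarith
  refine (dP_le_frob_sub_mul Z Zs hP).trans
    (le_sqrt_div_sqrt_mul_of_mul_sq_le (mul_pos hsqrt2 (hs i₀)) (frob_nonneg _)
      (opNorm_nonneg _) ?_)
  linarith [mul_le_mul_of_nonneg_left hlow (by linarith : 0 ≤ 2 * (√2 - 1))]

/-- For a perfectly balanced pair `(U, V)` (i.e. `‖UᵀU − VᵀV‖_F = 0`) and the
balanced SVD factorization `Z*` of a rank-`r` matrix `L*` with smallest positive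
singular value `σr`,
`d_P(Z, Z*) ≤ (√(2r)/√((√2 − 1)σr)) · ‖UVᵀ − L*‖_op`. -/
theorem procrustes_distance_op_norm_bound {n1 n2 r : ℕ}
    (Lstar : Matrix (Fin n1) (Fin n2) ℝ) (hrank : Lstar.rank = r)
    (Uo : Matrix (Fin n1) (Fin r) ℝ) (Vo : Matrix (Fin n2) (Fin r) ℝ)
    (s : Fin r → ℝ) (hs : ∀ i, 0 < s i)
    (hUo : Uoᵀ * Uo = 1) (hVo : Voᵀ * Vo = 1)
    (hL : Lstar = Uo * Matrix.diagonal s * Voᵀ)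
    (σr : ℝ) (hσr : IsLeast (Set.range s) σr)
    (U : Matrix (Fin n1) (Fin r) ℝ) (V : Matrix (Fin n2) (Fin r) ℝ)
    (hbal : frob (Uᵀ * U - Vᵀ * V) = 0) :
    dP (Matrix.fromRows U V)
        (Matrix.fromRows (Uo * Matrix.diagonal fun i => Real.sqrt (s i))
          (Vo * Matrix.diagonal fun i => Real.sqrt (s i))) ≤
      (Real.sqrt (2 * r) / Real.sqrt ((Real.sqrt 2 - 1) * σr)) *
        opNorm (U * Vᵀ - Lstar) :=
  procrustes_distance_op_norm_bound_general Lstar Uo Vo s hs hUo hVo hL σr hσr U V hbal
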